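/- The function d_0(T_a,T_b) = ‖m(T_a) − m(T_b)‖₂, where m(T) is the vector of root-to-MRCA edge counts for all tip pairs, is a metric on the set of topologies of rooted binary trees on k labeled tips (it is zero exactly when the trees have the same topology). -/

import Mathlib

/-- Rooted binary trees with tips labeled by `Fin k`; each internal node
stores the branch lengths of the edges to its two children. -/
inductive RTree (k : ℕ) : Type
  | leaf : Fin k → RTree k
  | node : ℝ → RTree k → ℝ → RTree k → RTree k

namespace RTree

variable {k : ℕ}

/-- The list of tip labels of a tree. -/
def tipList : RTree k → List (Fin k)
  | leaf i => [i]
  | node _ l _ r => l.tipList ++ r.tipList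

/-- The set of tip labels of a tree. -/
def tips (T : RTree k) : Finset (Fin k) := T.tipList.toFinset

/-- `T` is a phylogenetic tree on `k` labeled tips: each label occurs exactly once. -/
def IsPhylo (T : RTree k) : Prop := T.tipList.Nodup ∧ ∀ i : Fin k, i ∈ T.tipList

/-- All branch lengths are positive. -/
def PosLens : RTree k → Prop
  | leaf _ => True
  | node a l b r => 0 < a ∧ 0 < b ∧ PosLens l ∧ PosLens r

/-- All branch lengths are nonnegative. -/
def NonnegLens : RTree k → Prop
  | leaf _ => True
  | node a l b r => 0 ≤ a ∧ 0 ≤ b ∧ NonnegLens l ∧ NonnegLens r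

/-- All branch lengths are at most `ε`. -/
def LensLE (ε : ℝ) : RTree k → Prop
  | leaf _ => True
  | node a l b r => a ≤ ε ∧ b ≤ ε ∧ LensLE ε l ∧ LensLE ε r

/-- All branch lengths are equal to `1`. -/
def UnitLens : RTree k → Prop
  | leaf _ => True
  | node a l b r => a = 1 ∧ b = 1 ∧ UnitLens l ∧ UnitLens r

/-- `m T i j`: the number of edges on the path from the root to the
most recent common ancestor of tips `i` and `j`. -/
def m : RTree k → Fin k → Fin k → ℕ
  | leaf _, _, _ => 0
  | node _ l _ r, i, j =>
      if i ∈ l.tips ∧ j ∈ l.tips then m l i j + 1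
      else if i ∈ r.tips ∧ j ∈ r.tips then m r i j + 1
      else 0

/-- `Mlen T i j`: the sum of branch lengths on the path from the root to the
most recent common ancestor of tips `i` and `j`. -/
def Mlen : RTree k → Fin k → Fin k → ℝ
  | leaf _, _, _ => 0
  | node a l b r, i, j =>
      if i ∈ l.tips ∧ j ∈ l.tips then Mlen l i j + a
      else if i ∈ r.tips ∧ j ∈ r.tips then Mlen r i j + b
      else 0

/-- Whether the tree is a single leaf. -/
def isLeaf : RTree k → Bool
  | leaf _ => true
  | node _ _ _ _ => false

/-- `pend T i`: the length of the pendant edge leading to tip `i`. -/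
def pend : RTree k → Fin k → ℝ
  | leaf _, _ => 0
  | node a l b r, i =>
      if i ∈ l.tips then (if l.isLeaf then a else pend l i)
      else if i ∈ r.tips then (if r.isLeaf then b else pend r i)
      else 0

/-- The set of clades (tip sets of rooted subtrees) of a tree.  Two rooted
trees have the same topology iff they have the same set of clades, i.e. their
internal edges induce the same tip partitions. -/
def clades : RTree k → Set (Finset (Fin k))
  | leaf i => {{i}}
  | node a l b r => insert (node a l b r).tips (clades l ∪ clades r)

/-- Equality of rooted trees: same topology (ignoring the left/right order of
children) and equal corresponding branch lengths. -/
inductive TreeEq : RTree k → RTree k → Prop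
  | leaf (i : Fin k) : TreeEq (.leaf i) (.leaf i)
  | node {l l' r r' : RTree k} (a b : ℝ) :
      TreeEq l l' → TreeEq r r' → TreeEq (.node a l b r) (.node a l' b r')
  | swap {l l' r r' : RTree k} (a b : ℝ) :
      TreeEq l l' → TreeEq r r' → TreeEq (.node a l b r) (.node b r' a l')

/-- `S` is the rooted subtree of `T` hanging at a node at edge-depth `d`. -/
inductive SubtreeAt : RTree k → ℕ → RTree k → Prop
  | refl (T : RTree k) : SubtreeAt T 0 T
  | left {l S : RTree k} {d : ℕ} (a b : ℝ) (r : RTree k) :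
      SubtreeAt l d S → SubtreeAt (.node a l b r) (d + 1) S
  | right {r S : RTree k} {d : ℕ} (a b : ℝ) (l : RTree k) :
      SubtreeAt r d S → SubtreeAt (.node a l b r) (d + 1) S

/-- Relabel the tips of a tree by a permutation. -/
def relabel (σ : Equiv.Perm (Fin k)) : RTree k → RTree k
  | leaf i => leaf (σ i)
  | node a l b r => node a (relabel σ l) b (relabel σ r)

/-- The set of unordered pairs of distinct tips, represented by ordered pairs `(i, j)` with `i < j`. -/
def tipPairs (k : ℕ) : Finset (Fin k × Fin k) :=
  Finset.univ.filter (fun p => p.1 < p.2)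

/-- The `λ`-entry of the tree vector `v_λ(T)` at the pair `(i, j)`:
`(1 − λ) m_{i,j} + λ M_{i,j}`. -/
noncomputable def vPair (lam : ℝ) (T : RTree k) (i j : Fin k) : ℝ :=
  (1 - lam) * (T.m i j : ℝ) + lam * T.Mlen i j

/-- The `λ`-entry of the tree vector `v_λ(T)` at tip `i`: `(1 − λ) · 1 + λ p_i`. -/
noncomputable def vTip (lam : ℝ) (T : RTree k) (i : Fin k) : ℝ :=
  (1 - lam) * 1 + lam * T.pend i

/-- The metric `d_λ(T_a, T_b) = ‖v_λ(T_a) − v_λ(T_b)‖₂`. -/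
noncomputable def treeDist (lam : ℝ) (Ta Tb : RTree k) : ℝ :=
  Real.sqrt
    ((∑ p ∈ tipPairs k, (vPair lam Ta p.1 p.2 - vPair lam Tb p.1 p.2) ^ 2) +
      ∑ i : Fin k, (vTip lam Ta i - vTip lam Tb i) ^ 2)

/-- `‖m(T_a) − m(T_b)‖₂`, the Euclidean distance between the topology vectors
(the final `k` entries of `m` are all `1` and contribute nothing). -/
noncomputable def mDist (Ta Tb : RTree k) : ℝ :=
  Real.sqrt (∑ p ∈ tipPairs k, ((Ta.m p.1 p.2 : ℝ) - (Tb.m p.1 p.2 : ℝ)) ^ 2)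

/-- `‖M(T_a) − M(T_b)‖₂`, the Euclidean distance between the
branch-length vectors (root-to-MRCA path lengths and pendant lengths). -/
noncomputable def MDist (Ta Tb : RTree k) : ℝ :=
  Real.sqrt
    ((∑ p ∈ tipPairs k, (Ta.Mlen p.1 p.2 - Tb.Mlen p.1 p.2) ^ 2) +
      ∑ i : Fin k, (Ta.pend i - Tb.pend i) ^ 2)

/-- `D_λ(T_a,T_b) = (1−λ)‖m(T_a)−m(T_b)‖₂ + λ‖M(T_a)−M(T_b)‖₂`. -/
noncomputable def DDist (lam : ℝ) (Ta Tb : RTree k) : ℝ :=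
  (1 - lam) * mDist Ta Tb + lam * MDist Ta Tb

end RTree

/-!
The topology vector `m(T)` and the clade set of `T` determine each other. For tips `i` and `j`,
`m_{ij} + 1` counts the clades containing both (those on the path from the root down to their most
recent common ancestor). Conversely, every clade is a single tip or the set
`{x | m_{ij} ≤ m_{ix}}` of tips below the most recent common ancestor of two distinct tips `i`, `j`.
So `T ↦ m(T)` is injective on topologies, and `d₀` is the Euclidean distance between these vectors.
-/

namespace RTree

variable {k : ℕ}

@[simp]
lemma tips_leaf (i : Fin k) : (leaf i).tips = {i} := by
  simp [tips, tipList]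

@[simp]
lemma tips_node (a b : ℝ) (l r : RTree k) : (node a l b r).tips = l.tips ∪ r.tips := by
  simp [tips, tipList]

lemma tips_nonempty : ∀ T : RTree k, T.tips.Nonempty
  | leaf i => by simp
  | node _ l _ _ => by simpa using Or.inl (tips_nonempty l)

lemma nodup_tipList_node {a b : ℝ} {l r : RTree k} :
    (node a l b r).tipList.Nodup ↔
      l.tipList.Nodup ∧ r.tipList.Nodup ∧ Disjoint l.tips r.tips := by
  rw [tipList, List.nodup_append', tips, tips, List.disjoint_toFinset_iff_disjoint]

lemma subset_tips_of_mem_clades : ∀ {T : RTree k} {C : Finset (Fin k)}, C ∈ T.clades → C ⊆ T.tips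
  | leaf i, C, h => by simp_all [clades]
  | node a l b r, C, h => by
    simp only [clades, Set.mem_insert_iff, Set.mem_union] at h
    rcases h with rfl | h | h
    · exact subset_rfl
    · exact (subset_tips_of_mem_clades h).trans (by simp)
    · exact (subset_tips_of_mem_clades h).trans (by simp)

lemma clades_finite : ∀ T : RTree k, T.clades.Finite
  | leaf _ => Set.finite_singleton _
  | node _ l _ r => ((clades_finite l).union (clades_finite r)).insert _

lemma tips_node_notMem_clades {a b : ℝ} {l r : RTree k} (hd : Disjoint l.tips r.tips) :
    (node a l b r).tips ∉ l.clades ∪ r.clades := by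
  obtain ⟨x, hx⟩ := tips_nonempty l
  obtain ⟨y, hy⟩ := tips_nonempty r
  rintro (h | h)
  · exact Finset.disjoint_left.1 hd (subset_tips_of_mem_clades h (by simp [hy])) hy
  · exact Finset.disjoint_left.1 hd hx (subset_tips_of_mem_clades h (by simp [hx]))

lemma m_eq_zero_of_notMem : ∀ {T : RTree k} {i j : Fin k}, (i ∉ T.tips ∨ j ∉ T.tips) → T.m i j = 0
  | leaf _, _, _, _ => rfl
  | node a l b r, i, j, h => by
    simp only [tips_node, Finset.mem_union] at h
    rw [m, if_neg (by tauto), if_neg (by tauto)]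

lemma setOf_clades_mem_mem_eq_empty {T : RTree k} {i j : Fin k} (h : ¬(i ∈ T.tips ∧ j ∈ T.tips)) :
    {C ∈ T.clades | i ∈ C ∧ j ∈ C} = ∅ :=
  Set.eq_empty_of_forall_notMem fun _ hC =>
    h ⟨subset_tips_of_mem_clades hC.1 hC.2.1, subset_tips_of_mem_clades hC.1 hC.2.2⟩

lemma setOf_clades_node_mem_mem {a b : ℝ} {l r : RTree k} {i j : Fin k}
    (hi : i ∈ (node a l b r).tips) (hj : j ∈ (node a l b r).tips) :
    {C ∈ (node a l b r).clades | i ∈ C ∧ j ∈ C} =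
      insert (node a l b r).tips
        ({C ∈ l.clades | i ∈ C ∧ j ∈ C} ∪ {C ∈ r.clades | i ∈ C ∧ j ∈ C}) := by
  ext C
  simp only [clades, Set.mem_sep_iff, Set.mem_insert_iff, Set.mem_union]
  constructor
  · rintro ⟨rfl | hC | hC, hiC, hjC⟩ <;> simp_all
  · rintro (rfl | ⟨hC, hiC, hjC⟩ | ⟨hC, hiC, hjC⟩) <;> simp_all

lemma ncard_setOf_clades_mem_mem : ∀ {T : RTree k}, T.tipList.Nodup → ∀ {i j : Fin k},
    i ∈ T.tips → j ∈ T.tips → {C ∈ T.clades | i ∈ C ∧ j ∈ C}.ncard = T.m i j + 1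
  | leaf t, _, i, j, hi, hj => by
    rw [tips_leaf, Finset.mem_singleton] at hi hj
    rw [hi, hj]
    have : {C ∈ (leaf t).clades | t ∈ C ∧ t ∈ C} = {{t}} := by
      ext C; simp +contextual [clades]
    rw [this, Set.ncard_singleton]
    rfl
  | node a l b r, hT, i, j, hi, hj => by
    obtain ⟨hl, hr, hd⟩ := nodup_tipList_node.1 hT
    have hnotMem : (node a l b r).tips ∉
        {C ∈ l.clades | i ∈ C ∧ j ∈ C} ∪ {C ∈ r.clades | i ∈ C ∧ j ∈ C} :=
      fun h => tips_node_notMem_clades hd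
        (Set.union_subset_union (fun _ h => h.1) (fun _ h => h.1) h)
    have hfin : ({C ∈ l.clades | i ∈ C ∧ j ∈ C} ∪ {C ∈ r.clades | i ∈ C ∧ j ∈ C}).Finite :=
      ((clades_finite l).subset fun _ h => h.1).union ((clades_finite r).subset fun _ h => h.1)
    rw [setOf_clades_node_mem_mem hi hj, Set.ncard_insert_of_notMem hnotMem hfin, m]
    split_ifs with hijl hijr
    · rw [setOf_clades_mem_mem_eq_empty (T := r) fun h => Finset.disjoint_left.1 hd hijl.1 h.1,
        Set.union_empty, ncard_setOf_clades_mem_mem hl hijl.1 hijl.2]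
    · rw [setOf_clades_mem_mem_eq_empty hijl, Set.empty_union,
        ncard_setOf_clades_mem_mem hr hijr.1 hijr.2]
    · rw [setOf_clades_mem_mem_eq_empty hijl, setOf_clades_mem_mem_eq_empty hijr,
        Set.union_empty, Set.ncard_empty]

lemma m_le_m_self : ∀ {T : RTree k}, T.tipList.Nodup → ∀ i j : Fin k, T.m i j ≤ T.m i i
  | leaf _, _, _, _ => le_rfl
  | node a l b r, hT, i, j => by
    obtain ⟨hl, hr, hd⟩ := nodup_tipList_node.1 hT
    rw [m, m]
    split_ifs <;> simp_all [m_le_m_self hl i j, m_le_m_self hr i j, Finset.disjoint_left]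

/-- The tips below the most recent common ancestor of `i` and `j`: those whose most recent
common ancestor with `i` is at least as deep. -/
def mrcaClade (T : RTree k) (i j : Fin k) : Finset (Fin k) :=
  {x ∈ T.tips | T.m i j ≤ T.m i x}

lemma mrcaClade_node {a b : ℝ} {l r : RTree k} (hd : Disjoint l.tips r.tips) (i j : Fin k) :
    (node a l b r).mrcaClade i j =
      if i ∈ l.tips ∧ j ∈ l.tips then l.mrcaClade i j
      else if i ∈ r.tips ∧ j ∈ r.tips then r.mrcaClade i j
      else (node a l b r).tips := by
  unfold mrcaClade
  rw [m]
  split_ifs with hl hr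
  · have hir : i ∉ r.tips := Finset.disjoint_left.1 hd hl.1
    ext x
    by_cases hx : x ∈ l.tips <;> simp [m, hl.1, hir, hx]
  · have hil : i ∉ l.tips := Finset.disjoint_right.1 hd hr.1
    ext x
    by_cases hx : x ∈ r.tips <;> simp [m, hr.1, hil, hx]
  · simp

def mrcaClades (T : RTree k) : Set (Finset (Fin k)) :=
  {C | ∃ i ∈ T.tips, ∃ j ∈ T.tips, i ≠ j ∧ T.mrcaClade i j = C}

lemma mrcaClades_node {a b : ℝ} {l r : RTree k} (hd : Disjoint l.tips r.tips) :
    (node a l b r).mrcaClades = insert (node a l b r).tips (l.mrcaClades ∪ r.mrcaClades) := by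
  ext C
  simp only [mrcaClades, Set.mem_insert_iff, Set.mem_union, Set.mem_ofPred_eq]
  constructor
  · rintro ⟨i, hi, j, hj, hij, rfl⟩
    rw [mrcaClade_node hd]
    split_ifs with hl hr
    · exact Or.inr (Or.inl ⟨i, hl.1, j, hl.2, hij, rfl⟩)
    · exact Or.inr (Or.inr ⟨i, hr.1, j, hr.2, hij, rfl⟩)
    · exact Or.inl rfl
  · rintro (rfl | ⟨i, hi, j, hj, hij, rfl⟩ | ⟨i, hi, j, hj, hij, rfl⟩)
    · obtain ⟨x, hx⟩ := tips_nonempty l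
      obtain ⟨y, hy⟩ := tips_nonempty r
      have hxr : x ∉ r.tips := Finset.disjoint_left.1 hd hx
      have hyl : y ∉ l.tips := Finset.disjoint_right.1 hd hy
      refine ⟨x, by simp [hx], y, by simp [hy], fun h => hxr (h ▸ hy), ?_⟩
      rw [mrcaClade_node hd, if_neg fun h => hyl h.2, if_neg fun h => hxr h.1]
    · exact ⟨i, by simp [hi], j, by simp [hj], hij, by rw [mrcaClade_node hd, if_pos ⟨hi, hj⟩]⟩
    · have hil : i ∉ l.tips := Finset.disjoint_right.1 hd hi
      exact ⟨i, by simp [hi], j, by simp [hj], hij, by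
        rw [mrcaClade_node hd, if_neg fun h => hil h.1, if_pos ⟨hi, hj⟩]⟩

lemma clades_eq_union_mrcaClades : ∀ {T : RTree k}, T.tipList.Nodup →
    T.clades = (fun i => {i}) '' (T.tips : Set (Fin k)) ∪ T.mrcaClades
  | leaf t, _ => by
    have : (leaf t).mrcaClades = ∅ := by
      simp +contextual [mrcaClades]
    simp [clades, this]
  | node a l b r, hT => by
    obtain ⟨hl, hr, hd⟩ := nodup_tipList_node.1 hT
    rw [clades, clades_eq_union_mrcaClades hl, clades_eq_union_mrcaClades hr, mrcaClades_node hd,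
      tips_node, Finset.coe_union, Set.image_union]
    ext C
    simp only [Set.mem_union, Set.mem_insert_iff]
    tauto

lemma mrcaClades_congr {Ta Tb : RTree k} (ha : Ta.tipList.Nodup) (hb : Tb.tipList.Nodup)
    (htips : Ta.tips = Tb.tips) (hm : ∀ i j, i ≠ j → Ta.m i j = Tb.m i j) :
    Ta.mrcaClades = Tb.mrcaClades := by
  have hclade (i j : Fin k) (hij : i ≠ j) : Ta.mrcaClade i j = Tb.mrcaClade i j := by
    ext x
    simp only [mrcaClade, Finset.mem_filter, htips]
    rcases eq_or_ne x i with rfl | hxi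
    · simp [m_le_m_self ha, m_le_m_self hb]
    · rw [hm i j hij, hm i x hxi.symm]
  ext C
  simp only [mrcaClades, Set.mem_ofPred_eq, htips]
  constructor <;> rintro ⟨i, hi, j, hj, hij, rfl⟩
  · exact ⟨i, hi, j, hj, hij, (hclade i j hij).symm⟩
  · exact ⟨i, hi, j, hj, hij, hclade i j hij⟩

lemma m_symm : ∀ (T : RTree k) (i j : Fin k), T.m i j = T.m j i
  | leaf _, _, _ => rfl
  | node _ l _ r, i, j => by simp only [m, m_symm l i j, m_symm r i j, and_comm]

lemma clades_eq_iff_m_eq {Ta Tb : RTree k} (ha : Ta.tipList.Nodup) (hb : Tb.tipList.Nodup)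
    (htips : Ta.tips = Tb.tips) :
    Ta.clades = Tb.clades ↔ ∀ i j, i ≠ j → Ta.m i j = Tb.m i j := by
  refine ⟨fun hcl i j _ => ?_, fun hm => ?_⟩
  · by_cases h : i ∈ Ta.tips ∧ j ∈ Ta.tips
    · have hcard := ncard_setOf_clades_mem_mem ha h.1 h.2
      rw [hcl, ncard_setOf_clades_mem_mem hb (htips ▸ h.1) (htips ▸ h.2)] at hcard
      omega
    · rw [m_eq_zero_of_notMem (not_and_or.1 h), m_eq_zero_of_notMem (htips ▸ not_and_or.1 h)]
  · rw [clades_eq_union_mrcaClades ha, clades_eq_union_mrcaClades hb, htips,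
      mrcaClades_congr ha hb htips hm]

lemma IsPhylo.tips_eq_univ {T : RTree k} (h : T.IsPhylo) : T.tips = Finset.univ :=
  Finset.eq_univ_of_forall fun i => List.mem_toFinset.2 (h.2 i)

noncomputable def mVec (T : RTree k) : EuclideanSpace ℝ (tipPairs k) :=
  WithLp.toLp 2 fun p => (T.m p.1.1 p.1.2 : ℝ)

lemma mDist_eq_dist (Ta Tb : RTree k) : mDist Ta Tb = dist Ta.mVec Tb.mVec := by
  rw [EuclideanSpace.dist_eq, mDist, ← Finset.sum_coe_sort]
  simp [mVec, Real.dist_eq, sq_abs]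

lemma mVec_eq_iff {Ta Tb : RTree k} : Ta.mVec = Tb.mVec ↔ ∀ i j, i ≠ j → Ta.m i j = Tb.m i j := by
  have hlt : Ta.mVec = Tb.mVec ↔ ∀ i j, i < j → Ta.m i j = Tb.m i j := by
    simp [mVec, WithLp.ext_iff, funext_iff, tipPairs]
  rw [hlt]
  refine ⟨fun h i j hij => ?_, fun h i j hij => h i j hij.ne⟩
  rcases hij.lt_or_gt with hij | hji
  · exact h i j hij
  · rw [m_symm Ta, m_symm Tb, h j i hji]

end RTree

open RTree in
/-- `d₀(T_a,T_b) = ‖m(T_a) − m(T_b)‖₂` is a metric on the set of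
topologies of rooted binary trees on `k` labeled tips: it vanishes exactly when
the trees have the same topology (same set of clades / tip partitions). -/
theorem mDist_is_metric_on_topologies {k : ℕ} :
    (∀ Ta Tb : RTree k, Ta.IsPhylo → Tb.IsPhylo → 0 ≤ mDist Ta Tb) ∧
    (∀ Ta Tb : RTree k, Ta.IsPhylo → Tb.IsPhylo →
      (mDist Ta Tb = 0 ↔ Ta.clades = Tb.clades)) ∧
    (∀ Ta Tb : RTree k, Ta.IsPhylo → Tb.IsPhylo → mDist Ta Tb = mDist Tb Ta) ∧
    (∀ Ta Tb Tc : RTree k, Ta.IsPhylo → Tb.IsPhylo → Tc.IsPhylo →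
      mDist Ta Tb ≤ mDist Ta Tc + mDist Tc Tb) := by
  simp only [mDist_eq_dist]
  refine ⟨fun _ _ _ _ => dist_nonneg, fun Ta Tb ha hb => ?_, fun _ _ _ _ => dist_comm _ _,
    fun _ _ _ _ _ _ => dist_triangle _ _ _⟩
  rw [dist_eq_zero, mVec_eq_iff, clades_eq_iff_m_eq ha.1 hb.1 (by
    rw [ha.tips_eq_univ, hb.tips_eq_univ])]
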